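/- Let T be a four-dimensional vector space over a field k of characteristic 0, let (·|·) be a nondegenerate symmetric bilinear form on T, let Φ : T × T × T × T → k be a nonzero alternating multilinear map, and define the triple product [···] on T by the condition ([xyz]|t) = Φ(x,y,z,t) for all x,y,z,t ∈ T. Then (T, [···]) is a simple null orthogonal triple system. -/

import Mathlib

/-- A null orthogonal triple system: a trilinear product with `[xyy] = 0 = [yyx]` such
that the maps `d_{x,y} = [xy·]` are derivations of the product. -/
def IsNullOTS (k : Type*) {T : Type*} [Field k] [AddCommGroup T] [Module k T]
    (tp : T →ₗ[k] T →ₗ[k] T →ₗ[k] T) : Prop :=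
  (∀ x y : T, tp x y y = 0) ∧
  (∀ x y : T, tp y y x = 0) ∧
  (∀ x y u v w : T, tp x y (tp u v w) =
      tp (tp x y u) v w + tp u (tp x y v) w + tp u v (tp x y w))

/-- A null orthogonal triple system is simple if `[TTT] ≠ 0` and it has no proper nonzero
ideal, an ideal being a subspace `I` with `[TTI] ⊆ I`. -/
def IsSimpleNullOTS (k : Type*) {T : Type*} [Field k] [AddCommGroup T] [Module k T]
    (tp : T →ₗ[k] T →ₗ[k] T →ₗ[k] T) : Prop :=
  (∃ x y z : T, tp x y z ≠ 0) ∧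
  ∀ I : Submodule k T, (∀ x y z : T, z ∈ I → tp x y z ∈ I) → I = ⊥ ∨ I = ⊤

/-! For fixed `x, y`, the map `D = [xy·]` is `B`-skew because `Φ` is alternating in its last two
slots, and the Leibniz rule for `D`, paired with `t`, says that `Σᵢ Φ(v₁, …, D vᵢ, …, v₄)`
vanishes. That sum is `tr D · Φ(v)`, and a `B`-skew endomorphism has trace zero.

For simplicity, if `z ∈ I` and `w ⊥ I` then `Φ(x, y, z, w) = ([xyz] | w) = 0` for all `x, y`;
since a nonzero top form vanishes only on dependent families, `z` and `w` are proportional.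
So `I ≠ 0` gives `dim I^⊥ ≤ 1`, while `I^⊥ ≠ 0` would give `dim I ≤ 1`, contradicting
`dim I + dim I^⊥ = 4`. -/

open Module

namespace AlternatingMap

section CommRing

variable {R M N ι : Type*} [CommRing R] [AddCommGroup M] [Module R M] [AddCommGroup N]
  [Module R N] [DecidableEq ι]

theorem compLinearMap_update_id_apply (Φ : M [⋀^ι]→ₗ[R] N) (f : M →ₗ[R] M) (i : ι)
    (v : ι → M) :
    Φ.toMultilinearMap.compLinearMap (Function.update (fun _ ↦ LinearMap.id) i f) v =
      Φ (Function.update v i (f (v i))) := by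
  simp only [MultilinearMap.compLinearMap_apply, coe_multilinearMap]
  congr 1
  funext j
  rcases eq_or_ne j i with rfl | hji <;> simp [*]

variable [Fintype ι]

theorem map_update_basis (Φ : M [⋀^ι]→ₗ[R] N) (e : Basis ι R M) (i : ι) (w : M) :
    Φ (Function.update e i w) = e.repr w i • Φ e := by
  conv_lhs => rw [← e.sum_repr w]
  rw [Φ.map_update_sum, Finset.sum_eq_single i]
  · rw [Φ.map_update_smul, Function.update_eq_self]
  · intro j _ hji
    rw [Φ.map_update_smul, Φ.map_eq_zero_of_eq _ (i := i) (j := j) (by simp [hji]) hji.symm,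
      smul_zero]
  · simp

/-- The action of the endomorphism `f` on `Φ` by derivations. -/
def sumUpdate (Φ : M [⋀^ι]→ₗ[R] N) (f : M →ₗ[R] M) : M [⋀^ι]→ₗ[R] N where
  toMultilinearMap :=
    ∑ i, Φ.toMultilinearMap.compLinearMap (Function.update (fun _ ↦ LinearMap.id) i f)
  map_eq_zero_of_eq' v i j hv hij := by
    show (∑ _, _ : MultilinearMap R _ N) v = 0
    simp only [_root_.sum_apply, compLinearMap_update_id_apply]
    have hswap :
        Function.update v i (f (v i)) = Function.update v j (f (v j)) ∘ Equiv.swap i j := by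
      funext m
      rcases eq_or_ne m i with rfl | hmi
      · simp [hv]
      rcases eq_or_ne m j with rfl | hmj
      · simp [Function.update_of_ne hmi, Function.update_of_ne hij, hv]
      · simp [hmi, hmj, Equiv.swap_apply_of_ne_of_ne]
    rw [Fintype.sum_eq_add i j hij, hswap, Φ.map_swap _ hij, neg_add_cancel]
    rintro l ⟨hli, hlj⟩
    exact Φ.map_eq_zero_of_eq _ (by simp [hli.symm, hlj.symm, hv]) hij

theorem sumUpdate_apply (Φ : M [⋀^ι]→ₗ[R] N) (f : M →ₗ[R] M) (v : ι → M) :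
    Φ.sumUpdate f v = ∑ i, Φ (Function.update v i (f (v i))) := by
  simp only [sumUpdate, coe_mk, _root_.sum_apply, compLinearMap_update_id_apply]

theorem sumUpdate_apply_fin_four (Φ : M [⋀^Fin 4]→ₗ[R] N) (f : M →ₗ[R] M) (u v w t : M) :
    Φ.sumUpdate f ![u, v, w, t] =
      Φ ![f u, v, w, t] + Φ ![u, f v, w, t] + Φ ![u, v, f w, t] + Φ ![u, v, w, f t] := by
  rw [sumUpdate_apply, Fin.sum_univ_four]
  congr 4 <;> simp [Function.update_eq_iff, Fin.forall_fin_succ]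

theorem sumUpdate_apply_basis (Φ : M [⋀^ι]→ₗ[R] N) (f : M →ₗ[R] M) (e : Basis ι R M) :
    Φ.sumUpdate f e = LinearMap.trace R M f • Φ e := by
  simp only [sumUpdate_apply, map_update_basis, ← Finset.sum_smul,
    LinearMap.trace_eq_matrix_trace R e, Matrix.trace, Matrix.diag, LinearMap.toMatrix_apply]

theorem sumUpdate_eq_trace_smul (Φ : M [⋀^ι]→ₗ[R] R) (f : M →ₗ[R] M) (e : Basis ι R M) :
    Φ.sumUpdate f = LinearMap.trace R M f • Φ := by
  rw [(Φ.sumUpdate f).eq_smul_basis_det e, sumUpdate_apply_basis, smul_assoc,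
    ← Φ.eq_smul_basis_det e]

end CommRing

theorem map_ne_zero_of_linearIndependent {K V ι : Type*} [Field K] [AddCommGroup V] [Module K V]
    [FiniteDimensional K V] [Fintype ι] {Φ : V [⋀^ι]→ₗ[K] K} (hΦ : Φ ≠ 0) {v : ι → V}
    (hv : LinearIndependent K v) (hcard : Fintype.card ι = finrank K V) : Φ v ≠ 0 := by
  simpa using (Φ.map_basis_ne_zero_iff (basisOfLinearIndependentOfCardEqFinrank' v hv hcard)).2 hΦ

theorem map_swap_two_three {R M N : Type*} [CommRing R] [AddCommGroup M] [Module R M]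
    [AddCommGroup N] [Module R N] (Φ : M [⋀^Fin 4]→ₗ[R] N) (x y z t : M) :
    Φ ![x, y, t, z] = -Φ ![x, y, z, t] := by
  rw [← Φ.map_swap _ (show (2 : Fin 4) ≠ 3 by decide)]
  congr 1
  funext i
  fin_cases i <;> rfl

end AlternatingMap

theorem LinearMap.BilinForm.trace_eq_zero_of_isSkewAdjoint {K V : Type*} [Field K]
    [NeZero (2 : K)] [AddCommGroup V] [Module K V] [FiniteDimensional K V]
    {B : LinearMap.BilinForm K V} (hB : B.Nondegenerate) (hB' : B.IsSymm) {f : Module.End K V}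
    (hf : B.IsSkewAdjoint f) : LinearMap.trace K V f = 0 := by
  set b := Module.finBasis K V
  set d := B.dualBasis hB b with hd_def
  -- Computed in `b` and in its `B`-dual basis `d`, the trace comes out with opposite signs.
  have htrace_b : LinearMap.trace K V f = ∑ i, B (d i) (f (b i)) := by
    have hrepr : ∀ x i, b.repr x i = B (d i) x := fun x i ↦ by
      conv_lhs => rw [← B.dualBasis_dualBasis hB hB' b]
      rw [LinearMap.BilinForm.dualBasis_repr_apply, hB'.eq]
    simp only [LinearMap.trace_eq_matrix_trace K b, Matrix.trace, Matrix.diag,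
      LinearMap.toMatrix_apply, hrepr]
  have htrace_d : LinearMap.trace K V f = -∑ i, B (d i) (f (b i)) := by
    simp only [LinearMap.trace_eq_matrix_trace K d, Matrix.trace, Matrix.diag,
      LinearMap.toMatrix_apply, hd_def, LinearMap.BilinForm.dualBasis_repr_apply, hf _ _,
      Pi.neg_apply, map_neg, Finset.sum_neg_distrib]
  have h2 : (2 : K) * LinearMap.trace K V f = 0 := by linear_combination htrace_b + htrace_d
  exact (mul_eq_zero.1 h2).resolve_left two_ne_zero

theorem mem_span_singleton_of_forall_map_eq_zero {K V : Type*} [Field K] [AddCommGroup V]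
    [Module K V] [FiniteDimensional K V] (hdim : finrank K V = 4) {Φ : V [⋀^Fin 4]→ₗ[K] K}
    (hΦ : Φ ≠ 0) {z t : V} (hz : z ≠ 0) (h : ∀ x y, Φ ![x, y, z, t] = 0) : t ∈ K ∙ z := by
  by_contra ht
  have hzt : LinearIndependent K ![z, t] :=
    (LinearIndependent.pair_iff' hz).2 fun a ha ↦ ht (Submodule.mem_span_singleton.2 ⟨a, ha⟩)
  obtain ⟨y, hy⟩ := exists_linearIndependent_cons_of_lt_finrank hzt (by omega)
  obtain ⟨x, hx⟩ := exists_linearIndependent_cons_of_lt_finrank hy (by omega)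
  exact AlternatingMap.map_ne_zero_of_linearIndependent hΦ hx (by simp [hdim]) (h x y)

section FourFormTripleProduct

variable {k T : Type*} [Field k] [AddCommGroup T] [Module k T] {B : LinearMap.BilinForm k T}
  {Φ : T [⋀^Fin 4]→ₗ[k] k} {tp : T →ₗ[k] T →ₗ[k] T →ₗ[k] T}

theorem triple_self_right_eq_zero (hB : B.SeparatingLeft)
    (hdef : ∀ x y z t : T, B (tp x y z) t = Φ ![x, y, z, t]) (x y : T) : tp x y y = 0 :=
  hB _ fun t ↦ by rw [hdef]; exact Φ.map_eq_zero_of_eq _ (i := 1) (j := 2) rfl (by decide)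

theorem triple_self_left_eq_zero (hB : B.SeparatingLeft)
    (hdef : ∀ x y z t : T, B (tp x y z) t = Φ ![x, y, z, t]) (x y : T) : tp y y x = 0 :=
  hB _ fun t ↦ by rw [hdef]; exact Φ.map_eq_zero_of_eq _ (i := 0) (j := 1) rfl (by decide)

theorem isSkewAdjoint_triple (hB' : B.IsSymm)
    (hdef : ∀ x y z t : T, B (tp x y z) t = Φ ![x, y, z, t]) (x y : T) :
    B.IsSkewAdjoint (tp x y) := fun z t ↦ by
  rw [Pi.neg_apply, map_neg, hB'.eq z, hdef, hdef, Φ.map_swap_two_three]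

theorem triple_leibniz [NeZero (2 : k)] [FiniteDimensional k T] (hdim : finrank k T = 4)
    (hB : B.Nondegenerate) (hB' : B.IsSymm)
    (hdef : ∀ x y z t : T, B (tp x y z) t = Φ ![x, y, z, t]) (x y u v w : T) :
    tp x y (tp u v w) = tp (tp x y u) v w + tp u (tp x y v) w + tp u v (tp x y w) := by
  refine sub_eq_zero.1 (hB.1 _ fun t ↦ ?_)
  have hD := isSkewAdjoint_triple hB' hdef x y
  have hsum := Φ.sumUpdate_apply_fin_four (tp x y) u v w t
  rw [Φ.sumUpdate_eq_trace_smul _ (finBasisOfFinrankEq k T hdim),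
    B.trace_eq_zero_of_isSkewAdjoint hB hB' hD, zero_smul, AlternatingMap.zero_apply] at hsum
  rw [map_sub, LinearMap.sub_apply, hD, Pi.neg_apply, map_neg]
  simp only [map_add, LinearMap.add_apply, hdef]
  linear_combination hsum

theorem isNullOTS_of_fourForm [NeZero (2 : k)] [FiniteDimensional k T]
    (hdim : finrank k T = 4) (hB : B.Nondegenerate) (hB' : B.IsSymm)
    (hdef : ∀ x y z t : T, B (tp x y z) t = Φ ![x, y, z, t]) : IsNullOTS k tp :=
  ⟨triple_self_right_eq_zero hB.1 hdef, triple_self_left_eq_zero hB.1 hdef,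
    triple_leibniz hdim hB hB' hdef⟩

variable [FiniteDimensional k T] {I : Submodule k T}

theorem orthogonal_le_span_of_mem_ideal (hdim : finrank k T = 4) (hΦ : Φ ≠ 0)
    (hdef : ∀ x y z t : T, B (tp x y z) t = Φ ![x, y, z, t])
    (hI : ∀ x y z : T, z ∈ I → tp x y z ∈ I) {z : T} (hzI : z ∈ I) (hz : z ≠ 0) :
    B.orthogonal I ≤ k ∙ z := fun w hw ↦
  mem_span_singleton_of_forall_map_eq_zero hdim hΦ hz fun x y ↦ by
    rw [← hdef]; exact hw _ (hI x y z hzI)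

theorem le_span_of_mem_orthogonal_ideal (hdim : finrank k T = 4) (hΦ : Φ ≠ 0)
    (hdef : ∀ x y z t : T, B (tp x y z) t = Φ ![x, y, z, t])
    (hI : ∀ x y z : T, z ∈ I → tp x y z ∈ I) {w : T} (hw : w ∈ B.orthogonal I) (hw0 : w ≠ 0) :
    I ≤ k ∙ w := fun z hzI ↦
  mem_span_singleton_of_forall_map_eq_zero hdim hΦ hw0 fun x y ↦ by
    rw [Φ.map_swap_two_three, ← hdef, hw _ (hI x y z hzI), neg_zero]

theorem ideal_eq_bot_or_eq_top (hdim : finrank k T = 4) (hB : B.Nondegenerate) (hΦ : Φ ≠ 0)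
    (hdef : ∀ x y z t : T, B (tp x y z) t = Φ ![x, y, z, t])
    (hI : ∀ x y z : T, z ∈ I → tp x y z ∈ I) : I = ⊥ ∨ I = ⊤ := by
  have hdual := B.finrank_orthogonal hB I
  refine or_iff_not_imp_left.2 fun hI0 ↦ ?_
  obtain ⟨z, hzI, hz⟩ := I.ne_bot_iff.1 hI0
  have hJ : finrank k (B.orthogonal I) ≤ 1 :=
    (Submodule.finrank_mono (orthogonal_le_span_of_mem_ideal hdim hΦ hdef hI hzI hz)).trans
      (finrank_span_singleton hz).le
  have hJ0 : B.orthogonal I = ⊥ := by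
    by_contra hJ0
    obtain ⟨w, hw, hw0⟩ := (Submodule.ne_bot_iff _).1 hJ0
    have hI1 := (Submodule.finrank_mono
      (le_span_of_mem_orthogonal_ideal hdim hΦ hdef hI hw hw0)).trans
        (finrank_span_singleton hw0).le
    omega
  rw [hJ0, finrank_bot] at hdual
  exact Submodule.eq_top_of_finrank_eq (by have := I.finrank_le; omega)

theorem isSimpleNullOTS_of_fourForm (hdim : finrank k T = 4) (hB : B.Nondegenerate)
    (hΦ : Φ ≠ 0) (hdef : ∀ x y z t : T, B (tp x y z) t = Φ ![x, y, z, t]) :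
    IsSimpleNullOTS k tp := by
  refine ⟨?_, fun I hI ↦ ideal_eq_bot_or_eq_top hdim hB hΦ hdef hI⟩
  obtain ⟨v, hv⟩ := DFunLike.ne_iff.1 hΦ
  have hv4 : ![v 0, v 1, v 2, v 3] = v := by ext i; fin_cases i <;> rfl
  refine ⟨v 0, v 1, v 2, fun h ↦ hv ?_⟩
  rw [← hv4, ← hdef, h, map_zero, LinearMap.zero_apply, AlternatingMap.zero_apply]

end FourFormTripleProduct

/-- On a four-dimensional space `T` over a field of characteristic 0,
with a nondegenerate symmetric bilinear form `B` and a nonzero alternating 4-linear map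
`Φ`, the triple product defined by `([xyz]|t) = Φ(x,y,z,t)` makes `T` a simple null
orthogonal triple system. -/
theorem nullOTS_of_alternating_four_form (k T : Type*) [Field k] [CharZero k]
    [AddCommGroup T] [Module k T] [FiniteDimensional k T]
    (hdim : Module.finrank k T = 4)
    (B : T →ₗ[k] T →ₗ[k] k) (hsymm : ∀ x y : T, B x y = B y x)
    (hnondeg : ∀ x : T, (∀ y : T, B x y = 0) → x = 0)
    (Φ : AlternatingMap k T k (Fin 4)) (hΦ : Φ ≠ 0)
    (tp : T →ₗ[k] T →ₗ[k] T →ₗ[k] T)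
    (hdef : ∀ x y z t : T, B (tp x y z) t = Φ ![x, y, z, t]) :
    IsNullOTS k tp ∧ IsSimpleNullOTS k tp := by
  have hB' : LinearMap.BilinForm.IsSymm B := ⟨hsymm⟩
  have hB : B.Nondegenerate := hB'.isRefl.nondegenerate_iff_separatingLeft.2 hnondeg
  exact ⟨isNullOTS_of_fourForm hdim hB hB' hdef, isSimpleNullOTS_of_fourForm hdim hB hΦ hdef⟩
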